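/- arXiv:0706.0681 — 7 statements merged into one kernel-verified Lean document; each statement's English description precedes it below -/
import Mathlib

section
/- Let h(x) = Σ_{k≥0} (4^k (3k-1)!!/(k!·(k+1)!!)) x^{3k+1} be a formal power series over ℚ. Then h satisfies the cubic equation 8·h^3·x^2 − h^2 + x^2 = 0 as formal power series. -/
/-!
STATEMENT 0: the formal power series
`h(x) = Σ_{k≥0} (4^k (3k-1)!! / (k! (k+1)!!)) x^{3k+1}` over `ℚ`
satisfies `8 h³ x² − h² + x² = 0`.
Conventions: `(−1)!! = 1` (note for `k = 0` the numerator index `3k−1` is taken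
via truncated subtraction, giving `0‼ = 1 = (−1)!!`).
-/

open scoped Nat

/-- The series `h(x) = Σ_{k≥0} 4^k (3k−1)!!/(k!(k+1)!!) x^{3k+1}`. -/
noncomputable def hSeries : PowerSeries ℚ :=
  PowerSeries.mk fun n =>
    if n % 3 = 1 then
      ((4 : ℚ) ^ ((n - 1) / 3) * (3 * ((n - 1) / 3) - 1)‼) /
        (((n - 1) / 3)! * (((n - 1) / 3 + 1)‼))
    else 0

open PowerSeries

namespace HCubicAux

noncomputable def gam : ℕ → ℚ
  | 0 => 0
  | 1 => 1
  | n + 2 =>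
    (12 / (n + 1 : ℚ)) *
      ∑ i ∈ (Finset.range (n + 1)).attach,
        gam i * (((n - (i : ℕ) : ℕ) : ℚ) * gam (n - (i : ℕ)))
  termination_by n => n
  decreasing_by
  · have := i.2; simp only [Finset.mem_range] at this; omega
  · have := i.2; simp only [Finset.mem_range] at this; omega

lemma gam_eq (n : ℕ) : gam (n+2) =
    (12 / (n + 1 : ℚ)) *
      ∑ i ∈ Finset.range (n + 1), gam i * (((n - i : ℕ) : ℚ) * gam (n - i)) := by
  rw [gam]
  congr 1
  exact Finset.sum_attach (Finset.range (n + 1)) (fun j => gam j * (((n - j : ℕ) : ℚ) * gam (n - j)))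

noncomputable def Y : ℚ⟦X⟧ := PowerSeries.mk gam

lemma coeff_Y (n : ℕ) : coeff n Y = gam n := coeff_mk n gam

/-- `θ f = X f'` has coefficients `n·f_n`. -/
lemma coeff_th (f : ℚ⟦X⟧) (n : ℕ) :
    coeff n (X * d⁄dX ℚ f) = n * coeff n f := by
  cases n with
  | zero => simp [coeff_zero_eq_constantCoeff]
  | succ m =>
    rw [← pow_one (X : ℚ⟦X⟧), coeff_X_pow_mul', if_pos (by omega), Nat.add_sub_cancel,
      coeff_derivative]
    push_cast
    ring

/-- the basic ODE satisfied by `Y` by construction. -/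
lemma hB : (1 - 12 * X^2 * Y) * (X * d⁄dX ℚ Y) = Y := by
  have expand : (1 - 12 * X^2 * Y) * (X * d⁄dX ℚ Y)
      = (X * d⁄dX ℚ Y) - (C (12 : ℚ)) * (X^2 * (Y * (X * d⁄dX ℚ Y))) := by
    rw [map_ofNat]; ring
  ext n
  rw [expand, map_sub, coeff_C_mul, coeff_X_pow_mul', coeff_th, coeff_Y]
  match n with
  | 0 => norm_num [gam]
  | 1 => norm_num [gam]
  | (m+2) =>
    rw [if_pos (by omega)]
    have hconv : coeff (m + 2 - 2) (Y * (X * d⁄dX ℚ Y))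
        = ∑ i ∈ Finset.range (m + 1), gam i * (((m - i : ℕ) : ℚ) * gam (m - i)) := by
      rw [show m + 2 - 2 = m from rfl, coeff_mul,
        Finset.Nat.sum_antidiagonal_eq_sum_range_succ_mk]
      refine Finset.sum_congr rfl fun i _ => ?_
      rw [coeff_Y, coeff_th, coeff_Y]
    rw [hconv]
    have hm : ((m : ℚ) + 1) ≠ 0 := by positivity
    have := gam_eq m
    set S := ∑ i ∈ Finset.range (m + 1), gam i * (((m - i : ℕ) : ℚ) * gam (m - i)) with hS
    have h12 : 12 * S = ((m : ℚ) + 1) * gam (m+2) := by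
      rw [this]; field_simp
    push_cast
    linear_combination -h12


noncomputable def V : ℚ⟦X⟧ := X * d⁄dX ℚ Y
noncomputable def W : ℚ⟦X⟧ := X * d⁄dX ℚ V

lemma hC : (1 - 12 * X^2 * Y) * W = V + 24 * X^2 * Y * V + 12 * X^2 * V^2 := by
  have hB' : (1 - C (12 : ℚ) * X^2 * Y) * (X * d⁄dX ℚ Y) = Y := by rw [map_ofNat]; exact hB
  have key := congrArg (d⁄dX ℚ) hB'
  simp only [Derivation.leibniz, Derivation.leibniz_pow, derivative_X, derivative_C, map_sub,
    Derivation.map_one_eq_zero, smul_eq_mul, nsmul_eq_mul, mul_one, mul_zero, zero_mul,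
    pow_one, Nat.cast_ofNat, add_zero, zero_add, zero_sub, neg_mul, mul_neg] at key
  rw [map_ofNat] at key
  norm_num at key
  unfold W V
  simp only [Derivation.leibniz, derivative_X, smul_eq_mul, mul_one]
  linear_combination (X : ℚ⟦X⟧) * key


lemma gam0 : gam 0 = 0 := by rw [gam]
lemma gam1 : gam 1 = 1 := by rw [gam]
lemma gam2 : gam 2 = 0 := by
  rw [show (2:ℕ) = 0+2 from rfl, gam_eq]; norm_num [Finset.sum_range_succ, gam]
lemma gam3 : gam 3 = 0 := by
  rw [show (3:ℕ) = 1+2 from rfl, gam_eq]; norm_num [Finset.sum_range_succ, gam]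
lemma gam4 : gam 4 = 4 := by
  rw [show (4:ℕ) = 2+2 from rfl, gam_eq]
  norm_num [Finset.sum_range_succ, gam, gam2]
lemma gam5 : gam 5 = 0 := by
  rw [show (5:ℕ) = 3+2 from rfl, gam_eq]
  norm_num [Finset.sum_range_succ, gam, gam2, gam3]

lemma hFtheta : X * d⁄dX ℚ (8 * X^2 * Y^3 - Y^2 + X^2) = 2 * (8 * X^2 * Y^3 - Y^2 + X^2) := by
  have e8 : (8 : ℚ⟦X⟧) = C (8 : ℚ) := (map_ofNat _ _).symm
  rw [e8]
  simp only [map_add, map_sub, Derivation.leibniz, Derivation.leibniz_pow, derivative_X,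
    derivative_C, smul_eq_mul, nsmul_eq_mul, mul_one, mul_zero, zero_mul, add_zero, zero_add]
  rw [map_ofNat]
  norm_num
  linear_combination (-(2:ℚ⟦X⟧) * Y) * hB

lemma hF : 8 * X^2 * Y^3 - Y^2 + X^2 = 0 := by
  ext n
  by_cases h2 : n = 2
  · subst h2
    have c1 : coeff 2 ((8:ℚ⟦X⟧) * X^2 * Y^3) = 0 := by
      rw [show ((8:ℚ⟦X⟧) * X^2 * Y^3) = C (8 : ℚ) * (X^2 * Y^3) from by rw [map_ofNat]; ring,
        coeff_C_mul, coeff_X_pow_mul', if_pos (by omega)]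
      simp [coeff_zero_eq_constantCoeff, constantCoeff_mk, Y, gam0]
    have c2 : coeff 2 (Y^2) = 1 := by
      rw [pow_two, coeff_mul, Finset.Nat.sum_antidiagonal_eq_sum_range_succ_mk]
      norm_num [Finset.sum_range_succ, coeff_Y, gam0, gam1, gam2]
    simp [map_sub, map_add, c1, c2, coeff_X_pow]
  · have h := congrArg (coeff n) hFtheta
    rw [coeff_th, show ((2:ℚ⟦X⟧)) = C (2 : ℚ) from (map_ofNat _ _).symm, coeff_C_mul] at h
    have hn : ((n:ℚ) - 2) ≠ 0 := by
      intro hc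
      apply h2
      have : (n:ℚ) = 2 := by linarith
      exact_mod_cast this
    have : ((n:ℚ) - 2) * coeff n (8 * X^2 * Y^3 - Y^2 + X^2) = 0 := by linear_combination h
    rw [map_zero]
    exact (mul_eq_zero.mp this).resolve_left hn


lemma hBV : (1 - 12 * X^2 * Y) * V = Y := hB

lemma hODE : W + V - 2*Y - 432*X^6*(W + 4*V) - 72*X^4 = 0 := by
  have big : (1 - 12*X^2*Y)^3 * (W + V - 2*Y - 432*X^6*(W + 4*V) - 72*X^4) = 0 := by
    linear_combination
      (2 + 12*X^2*V - 144*X^4*Y*V - 144*X^4*Y^2 - 2160*X^6 - 5184*X^8*V + 31104*X^8*Y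
        + 62208*X^10*Y*V - 124416*X^10*Y^2) * hBV
      + (1 - 24*X^2*Y + 144*X^4*Y^2 - 432*X^6 + 10368*X^8*Y - 62208*X^10*Y^2) * hC
      + (-72*X^2 + 432*X^4*Y) * hF
  have hd : (1 - 12*X^2*Y : ℚ⟦X⟧) ≠ 0 := by
    intro h
    have h0 := congrArg (constantCoeff) h
    simp only [map_sub, map_one, map_mul, map_pow, constantCoeff_X, map_zero,
      map_ofNat] at h0
    norm_num at h0
  exact (mul_eq_zero.mp big).resolve_left (pow_ne_zero 3 hd)

lemma yrec (k : ℕ) :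
    ((k:ℚ)+5) * ((k:ℚ)+8) * coeff (k+6) Y = 432*(k:ℚ)*((k:ℚ)+4) * coeff k Y := by
  have hODE' : W + V - C (2 : ℚ) * Y - C (432 : ℚ) * (X^6*(W + C (4 : ℚ) * V)) - C (72 : ℚ) * X^4 = 0 := by
    rw [map_ofNat, map_ofNat, map_ofNat, map_ofNat]
    linear_combination hODE
  have h := congrArg (coeff (k+6)) hODE'
  rw [map_zero, map_sub, map_sub, map_sub, map_add, coeff_C_mul, coeff_C_mul, coeff_C_mul,
    coeff_X_pow_mul, map_add, coeff_C_mul, coeff_X_pow,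
    if_neg (by omega : ¬ (k+6 = 4))] at h
  unfold W V at h
  simp only [coeff_th] at h
  push_cast at h ⊢
  linear_combination h


lemma dfac_pos : ∀ n : ℕ, 0 < n‼
  | 0 => by decide
  | 1 => by decide
  | n+2 => by rw [Nat.doubleFactorial_add_two]; exact Nat.mul_pos (by omega) (dfac_pos n)

lemma dfac_cast_ne (n : ℕ) : ((n‼ : ℕ) : ℚ) ≠ 0 :=
  Nat.cast_ne_zero.mpr (by have := dfac_pos n; omega)

lemma hrec (k : ℕ) :
    ((k:ℚ)+5) * ((k:ℚ)+8) * coeff (k+6) hSeries = 432*(k:ℚ)*((k:ℚ)+4) * coeff k hSeries := by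
  obtain ⟨j, hj⟩ : ∃ j, k = 3*j ∨ k = 3*j+1 ∨ k = 3*j+2 := ⟨k/3, by omega⟩
  rcases hj with rfl | rfl | rfl
  · simp only [hSeries, coeff_mk]
    rw [if_neg (by omega), if_neg (by omega)]
    ring
  · simp only [hSeries, coeff_mk]
    rw [if_pos (by omega), if_pos (by omega),
      show (3*j+1+6-1)/3 = j+2 by omega, show (3*j+1-1)/3 = j by omega]
    rcases j with _ | i
    · have d5 : (5:ℕ)‼ = 15 := by decide
      have d0 : (0:ℕ)‼ = 1 := by decide
      have d3 : (3:ℕ)‼ = 3 := by decide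
      have d1 : (1:ℕ)‼ = 1 := by decide
      norm_num [d5, d0, d3, d1, Nat.factorial]
    · -- j = i+1
      rw [show (3*(i+1+2)-1 : ℕ) = 3*i+8 by omega, show (3*(i+1)-1 : ℕ) = 3*i+2 by omega,
        show (i+1+2 : ℕ) = i+3 by omega, show (i+1+2+1 : ℕ) = i+2+2 by omega,
        show (i+1+1 : ℕ) = i+2 by omega]
      have e1 : (3*i+8)‼ = (3*i+8) * (3*i+6)‼ := by
        rw [show 3*i+8 = 3*i+6+2 by ring]; exact Nat.doubleFactorial_add_two _
      have e2 : (3*i+6)‼ = (3*i+6) * (3*i+4)‼ := by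
        rw [show 3*i+6 = 3*i+4+2 by ring]; exact Nat.doubleFactorial_add_two _
      have e3 : (3*i+4)‼ = (3*i+4) * (3*i+2)‼ := by
        rw [show 3*i+4 = 3*i+2+2 by ring]; exact Nat.doubleFactorial_add_two _
      have e4 : (i+2+2)‼ = (i+4) * (i+2)‼ := by
        rw [show (i+4 : ℕ) = i+2+2 by ring]; exact Nat.doubleFactorial_add_two _
      have f1 : (i+3)! = (i+3) * (i+2)! := by
        rw [show (i+3:ℕ) = i+2+1 by ring]; exact Nat.factorial_succ _
      have f2 : (i+2)! = (i+2) * (i+1)! := by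
        rw [show (i+2:ℕ) = i+1+1 by ring]; exact Nat.factorial_succ _
      rw [e1, e2, e3, e4, f1, f2]
      have n1 : (((i+1)! : ℕ) : ℚ) ≠ 0 := Nat.cast_ne_zero.mpr (Nat.factorial_ne_zero _)
      have n2 : (((i+2)‼ : ℕ) : ℚ) ≠ 0 := dfac_cast_ne _
      have n3 : (((3*i+2)‼ : ℕ) : ℚ) ≠ 0 := dfac_cast_ne _
      push_cast
      field_simp
      ring
  · simp only [hSeries, coeff_mk]
    rw [if_neg (by omega), if_neg (by omega)]
    ring

lemma hS_eq_Y : hSeries = Y := by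
  apply PowerSeries.ext; intro n
  induction n using Nat.strong_induction_on with
  | _ n ih =>
    by_cases h6 : n < 6
    · have hc : ∀ m, coeff m hSeries = if m % 3 = 1 then
          ((4 : ℚ) ^ ((m - 1) / 3) * (3 * ((m - 1) / 3) - 1)‼) /
            (((m - 1) / 3)! * (((m - 1) / 3 + 1)‼)) else 0 := fun m => coeff_mk m _
      interval_cases n
      · rw [hc, if_neg (by norm_num), coeff_Y, gam0]
      · have d0 : (0:ℕ)‼ = 1 := by decide
        have d1 : (1:ℕ)‼ = 1 := by decide
        rw [hc, if_pos (by norm_num), coeff_Y, gam1]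
        norm_num [d0, d1, Nat.factorial]
      · rw [hc, if_neg (by norm_num), coeff_Y, gam2]
      · rw [hc, if_neg (by norm_num), coeff_Y, gam3]
      · have d2 : (2:ℕ)‼ = 2 := by decide
        rw [hc, if_pos (by norm_num), coeff_Y, gam4]
        norm_num [d2, Nat.factorial]
      · rw [hc, if_neg (by norm_num), coeff_Y, gam5]
    · obtain ⟨k, rfl⟩ : ∃ k, n = k + 6 := ⟨n - 6, by omega⟩
      have h1 := hrec k
      have h2 := yrec k
      rw [ih k (by omega)] at h1
      have hne : ((k:ℚ)+5) * ((k:ℚ)+8) ≠ 0 := by positivity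
      exact mul_left_cancel₀ hne (h1.trans h2.symm)

end HCubicAux

theorem hSeries_cubic :
    8 * hSeries ^ 3 * (PowerSeries.X : PowerSeries ℚ) ^ 2 - hSeries ^ 2
      + (PowerSeries.X : PowerSeries ℚ) ^ 2 = 0 := by
  rw [HCubicAux.hS_eq_Y]
  linear_combination HCubicAux.hF
end

section
/- Let ζ(t) be the unique formal power series with ζ(0)=0 satisfying ζ = 8t(1+ζ)^{3/2} (interpreting (1+ζ)^{3/2} via the binomial series). Then for all m ≥ 1 and k ≥ 0, the coefficient of t^k in (1+ζ(t))^{m/2·2} = (1+ζ)^m equals (m/k!)·4^k·(2m+3k−2)!!/(2m+k)!!, where for k=0 this equals 1. -/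
/-!
STATEMENT 1: Let `ζ(t)` be the formal power series with `ζ(0)=0` satisfying
`ζ = 8 t (1+ζ)^{3/2}`, where `(1+ζ)^{3/2}` is encoded as the unique power series `w`
with constant term `1` and `w² = (1+ζ)³`.  Then for all `m ≥ 1` and `k ≥ 0`,
`[t^k] (1+ζ)^m = (2m/k!) · 4^k · (2m+3k−2)!!/(2m+k)!!`
(for `k = 0` this equals `1`).
Double factorials use `(−1)!! = 0!! = 1`.
-/

open scoped Nat

namespace ZetaAux

open PowerSeries

/-- The claimed coefficient. -/
noncomputable def c (j k : ℕ) : ℚ :=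
  (j : ℚ) / (k)! * 4 ^ k * ((j + 3 * k - 2)‼ : ℚ) / ((j + k)‼ : ℚ)

lemma dfac_ne (n : ℕ) : ((n‼ : ℚ)) ≠ 0 := by
  exact_mod_cast (Nat.doubleFactorial_pos n).ne'

lemma fac_ne (n : ℕ) : ((n ! : ℚ)) ≠ 0 := by
  exact_mod_cast (Nat.factorial_pos n).ne'

lemma c_zero {j : ℕ} (hj : 1 ≤ j) : c j 0 = 1 := by
  match j, hj with
  | 1, _ => simp [c, Nat.doubleFactorial]
  | (n+2), _ =>
    have h1 : n + 2 + 3 * 0 - 2 = n := by omega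
    have h2 : n + 2 + 0 = n + 2 := by omega
    have hA := dfac_ne n
    have hn : ((n : ℚ) + 2) ≠ 0 := by positivity
    unfold c
    rw [h1, h2, Nat.doubleFactorial_add_two]
    push_cast
    field_simp
    simp

lemma c_rec (j k : ℕ) :
    c (j+2) (k+1) = c j (k+1) + 8 * c (j+3) k := by
  unfold c
  have e1 : j + 2 + 3 * (k+1) - 2 = (j + 3*k + 1) + 2 := by omega
  have e2 : j + 3 * (k+1) - 2 = j + 3*k + 1 := by omega
  have e3 : j + 3 + 3 * k - 2 = j + 3*k + 1 := by omega
  have e4 : j + 2 + (k+1) = (j + k + 1) + 2 := by omega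
  have e5 : j + (k+1) = j + k + 1 := by omega
  have e6 : j + 3 + k = (j + k + 1) + 2 := by omega
  rw [e1, e2, e3, e4, e5, e6]
  simp only [Nat.doubleFactorial_add_two, Nat.factorial_succ]
  have hA := dfac_ne (j + 3*k + 1)
  have hB := dfac_ne (j + k + 1)
  have hk := fac_ne k
  have hk1 : ((k:ℚ)+1) ≠ 0 := by positivity
  have hjk : ((j:ℚ)+(k:ℚ)+1+2) ≠ 0 := by positivity
  push_cast
  field_simp
  ring

lemma c2_rec (k : ℕ) : c 2 (k+1) = 8 * c 3 k := by
  unfold c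
  have e1 : 2 + 3 * (k+1) - 2 = (3*k + 1) + 2 := by omega
  have e2 : 3 + 3 * k - 2 = 3*k + 1 := by omega
  have e3 : 2 + (k+1) = k + 3 := by omega
  have e4 : 3 + k = k + 3 := by omega
  rw [e1, e2, e3, e4]
  simp only [Nat.doubleFactorial_add_two, Nat.factorial_succ]
  have hA := dfac_ne (3*k + 1)
  have hB := dfac_ne (k + 3)
  have hk := fac_ne k
  have hk1 : ((k:ℚ)+1) ≠ 0 := by positivity
  push_cast
  field_simp
  ring

lemma c3_rec (k : ℕ) : ((k:ℚ)+1) * c 3 (k+1) = 3 * (3*(k:ℚ)+4) * c 4 k := by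
  unfold c
  have e1 : 3 + 3 * (k+1) - 2 = (3*k + 2) + 2 := by omega
  have e2 : 4 + 3 * k - 2 = 3*k + 2 := by omega
  have e3 : 3 + (k+1) = k + 4 := by omega
  have e4 : 4 + k = k + 4 := by omega
  rw [e1, e2, e3, e4]
  simp only [Nat.doubleFactorial_add_two, Nat.factorial_succ]
  have hA := dfac_ne (3*k + 2)
  have hB := dfac_ne (k + 4)
  have hk := fac_ne k
  have hk1 : ((k:ℚ)+1) ≠ 0 := by positivity
  push_cast
  field_simp
  ring

lemma key (h : PowerSeries ℚ) (h0 : constantCoeff h = 1)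
    (heq : h ^ 2 = 1 + PowerSeries.C 8 * (X * h ^ 3)) :
    ∀ k j, 1 ≤ j → coeff k (h ^ j) = c j k := by
  -- basic step relation
  have S1 : ∀ (j n : ℕ),
      coeff (n+1) (h^(j+2)) = coeff (n+1) (h^j) + 8 * coeff n (h^(j+3)) := by
    intro j n
    have e : h^(j+2) = h^j + PowerSeries.C 8 * (X * h^(j+3)) := by
      linear_combination (h^j) * heq
    rw [e, map_add, coeff_C_mul, coeff_succ_X_mul]
  -- derivative relation
  have S2 : ∀ n : ℕ, 2 * (((n:ℚ)+1) * coeff (n+1) (h^3)) =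
      (24 + 18*(n:ℚ)) * coeff n (h^4) := by
    have hC8 : PowerSeries.C 8 = (8 : PowerSeries ℚ) := by
      exact map_ofNat _ 8
    set d := d⁄dX ℚ h with hd
    have e2 : d⁄dX ℚ (h^2) = 2*h*d := by
      rw [pow_two, Derivation.leibniz, smul_eq_mul]; ring
    have e3 : d⁄dX ℚ (h^3) = 3*h^2*d := by
      rw [pow_succ, Derivation.leibniz, e2, smul_eq_mul, smul_eq_mul]; ring
    have e4 : d⁄dX ℚ (h^4) = 4*h^3*d := by
      rw [pow_succ, Derivation.leibniz, e3, smul_eq_mul, smul_eq_mul]; ring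
    have master : 2*h*d = 8 * (X * (3*h^2*d) + h^3) := by
      have hm := congrArg (d⁄dX ℚ) heq
      rw [e2, map_add, Derivation.map_one_eq_zero, Derivation.leibniz,
        Derivation.leibniz, derivative_C, derivative_X, e3] at hm
      simp only [smul_eq_mul, hC8] at hm
      linear_combination hm
    have T : PowerSeries.C 2 * (d⁄dX ℚ (h^3)) =
        PowerSeries.C 24 * h^4 + PowerSeries.C 18 * (X * (d⁄dX ℚ (h^4))) := by
      rw [e3, e4]
      rw [show PowerSeries.C 2 = (2 : PowerSeries ℚ) from map_ofNat _ 2,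
          show PowerSeries.C 24 = (24 : PowerSeries ℚ) from map_ofNat _ 24,
          show PowerSeries.C 18 = (18 : PowerSeries ℚ) from map_ofNat _ 18]
      linear_combination (3*h) * master
    intro n
    have hco := congrArg (coeff n) T
    rw [coeff_C_mul, map_add, coeff_C_mul, coeff_C_mul, coeff_derivative] at hco
    have hXd : coeff n (X * (d⁄dX ℚ (h^4))) = (n : ℚ) * coeff n (h^4) := by
      cases n with
      | zero =>
        rw [coeff_zero_eq_constantCoeff_apply, map_mul, constantCoeff_X]
        push_cast; ring
      | succ m =>
        rw [coeff_succ_X_mul, coeff_derivative]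
        push_cast; ring
    rw [hXd] at hco
    linear_combination hco
  have S0 : ∀ j : ℕ, coeff 0 (h ^ j) = 1 := by
    intro j
    rw [coeff_zero_eq_constantCoeff_apply, map_pow, h0, one_pow]
  intro k
  induction k using Nat.strong_induction_on with
  | _ k ih =>
    match k, ih with
    | 0, _ =>
      intro j hj
      rw [S0, c_zero hj]
    | (k+1), ih =>
      have hk4 : coeff k (h^4) = c 4 k := ih k (Nat.lt_succ_self k) 4 (by norm_num)
      have h3 : coeff (k+1) (h^3) = c 3 (k+1) := by
        have hs2 := S2 k
        have hc3 := c3_rec k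
        rw [hk4] at hs2
        have hne : (2:ℚ) * ((k:ℚ)+1) ≠ 0 := by positivity
        have hfin : (2:ℚ) * (((k:ℚ)+1) * coeff (k+1) (h^3)) =
            (2:ℚ) * (((k:ℚ)+1) * c 3 (k+1)) := by
          linear_combination hs2 - 2 * hc3
        have h1' := mul_left_cancel₀ (by norm_num : (2:ℚ) ≠ 0) hfin
        exact mul_left_cancel₀ (by positivity : ((k:ℚ)+1) ≠ 0) h1'
      have h2 : coeff (k+1) (h^2) = c 2 (k+1) := by
        have hs := S1 0 k
        rw [pow_zero, coeff_one] at hs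
        simp only [Nat.succ_ne_zero, if_false] at hs
        rw [hs, ih k (Nat.lt_succ_self k) 3 (by norm_num), c2_rec]
        ring
      have h1 : coeff (k+1) (h^1) = c 1 (k+1) := by
        have hs := S1 1 k
        rw [h3, hk4] at hs
        have hc := c_rec 1 k
        linarith [hs, hc]
      intro j
      induction j using Nat.strong_induction_on with
      | _ j ihj =>
        match j, ihj with
        | 0, _ => intro hj0; exact absurd hj0 (by omega)
        | 1, _ => intro _; exact h1
        | 2, _ => intro _; exact h2
        | 3, _ => intro _; exact h3
        | (i+4), ihj =>
          intro _
          have hs := S1 (i+2) k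
          rw [ihj (i+2) (by omega) (by omega),
            ih k (Nat.lt_succ_self k) (i+5) (by omega)] at hs
          rw [hs, ← c_rec (i+2) k]

end ZetaAux

theorem coeff_one_add_zeta_pow
    (ζ w : PowerSeries ℚ)
    (hζ0 : PowerSeries.constantCoeff ζ = 0)
    (hw0 : PowerSeries.constantCoeff w = 1)
    (hw : w ^ 2 = (1 + ζ) ^ 3)
    (hζ : ζ = 8 * PowerSeries.X * w)
    (m k : ℕ) (hm : 1 ≤ m) :
    PowerSeries.coeff k ((1 + ζ) ^ m) =
      (2 * m : ℚ) / (k)! * 4 ^ k *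
        ((2 * m + 3 * k - 2)‼ : ℚ) / ((2 * m + k)‼ : ℚ) := by
  classical
  open PowerSeries in
  have hf0 : constantCoeff (1 + ζ) = 1 := by
    rw [map_add, map_one, hζ0, add_zero]
  have hf0' : constantCoeff (1 + ζ) ≠ 0 := by rw [hf0]; exact one_ne_zero
  set h : PowerSeries ℚ := w * (1 + ζ)⁻¹ with hdef
  have hinv : (1 + ζ)⁻¹ * (1 + ζ) = 1 := PowerSeries.inv_mul_cancel _ hf0'
  have hh2 : h ^ 2 = 1 + ζ := by
    have e : h ^ 2 = (1 + ζ) * ((1 + ζ)⁻¹ * (1 + ζ))^2 := by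
      rw [hdef]
      linear_combination ((1+ζ)⁻¹)^2 * hw
    rw [e, hinv, one_pow, mul_one]
  have hh3 : h ^ 3 = w := by
    have e : h ^ 3 = h * h ^ 2 := by ring
    rw [e, hh2, hdef]
    calc w * (1 + ζ)⁻¹ * (1 + ζ) = w * ((1 + ζ)⁻¹ * (1 + ζ)) := by ring
    _ = w := by rw [hinv, mul_one]
  have h0 : PowerSeries.constantCoeff h = 1 := by
    rw [hdef, map_mul, hw0, PowerSeries.constantCoeff_inv, hf0, one_mul, inv_one]
  have heq : h ^ 2 = 1 + PowerSeries.C 8 * (PowerSeries.X * h ^ 3) := by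
    rw [hh2, hh3, show PowerSeries.C 8 = (8 : PowerSeries ℚ) from map_ofNat _ 8]
    linear_combination hζ
  have hkey := ZetaAux.key h h0 heq k (2*m) (by omega)
  rw [show (1 + ζ) ^ m = h ^ (2*m) by rw [pow_mul, hh2]]
  rw [hkey]
  unfold ZetaAux.c
  push_cast
  ring
end

section
/- For the series h(x) = Σ_{k≥0} (4^k (3k-1)!!/(k!(k+1)!!)) x^{3k+1} and any m ≥ 1, the coefficient of x^n in h(x)^m is zero unless n = m + 3k for some integer k ≥ 0, in which case it equals m·4^k·(m+3k−2)!!/(k!·(m+k)!!). -/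
/-!
STATEMENT 2: For `h(x) = Σ_{k≥0} 4^k (3k−1)!!/(k!(k+1)!!) x^{3k+1}` and `m ≥ 1`,
the coefficient of `x^n` in `h^m` vanishes unless `n = m + 3k` for some `k ≥ 0`,
in which case it equals `m · 4^k · (m+3k−2)!!/(k! (m+k)!!)`.
Conventions: `(−1)!! = 0!! = 1` (truncated subtraction in `ℕ` realizes
`(−1)!!` as `0‼ = 1`).
-/

open scoped Nat

open Polynomial Finset

noncomputable def Pq (k : ℕ) (x : ℚ) : ℚ := ∏ i ∈ Finset.range k, (x + 2*i)

lemma Pq_zero (x : ℚ) : Pq 0 x = 1 := by simp [Pq]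

lemma Pq_succ (k : ℕ) (x : ℚ) : Pq (k+1) x = Pq k x * (x + 2*k) := by
  simp [Pq, Finset.prod_range_succ]

lemma Pq_succ' (k : ℕ) (x : ℚ) : Pq (k+1) x = x * Pq k (x+2) := by
  rw [Pq, Finset.prod_range_succ']
  push_cast
  rw [Finset.prod_congr rfl (fun i (_ : i ∈ Finset.range k) =>
    show x + 2*((i:ℚ)+1) = (x+2) + 2*i by ring)]
  simp [Pq, mul_comm]

noncomputable def Gq (k : ℕ) (α : ℚ) : ℚ := Pq k (α + k + 2) / (k)!

noncomputable def Fq (k : ℕ) (α : ℚ) : ℚ :=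
  if k = 0 then 1 else α * Pq (k-1) (α + k + 2) / (k)!

lemma Fq_zero (α : ℚ) : Fq 0 α = 1 := rfl

lemma Fq_succ (k : ℕ) (α : ℚ) :
    Fq (k+1) α = α * Pq k (α + k + 3) / ((k+1)! : ℕ) := by
  rw [Fq, if_neg (Nat.succ_ne_zero k)]
  have e : α + ((k:ℕ)+1 : ℕ) + 2 = α + k + 3 := by push_cast; ring
  simp only [Nat.add_sub_cancel, e]

lemma Gq_zero (α : ℚ) : Gq 0 α = 1 := by simp [Gq, Pq]

lemma factorial_succ_q (k : ℕ) : ((k+1)! : ℚ) = (k+1) * (k)! := by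
  push_cast [Nat.factorial_succ]; ring

lemma factorial_ne_zero_q (k : ℕ) : ((k)! : ℚ) ≠ 0 := by
  exact_mod_cast (Nat.factorial_pos k).ne'

/-- Pascal-type recurrence for `G`. -/
lemma Gq_pascal (k : ℕ) (δ : ℚ) :
    Gq (k+1) δ = Gq (k+1) (δ - 2) + 2 * Gq k (δ + 1) := by
  simp only [Gq]
  have e1 : δ + ((k:ℕ)+1 : ℕ) + 2 = δ + k + 3 := by push_cast; ring
  have e2 : δ - 2 + ((k:ℕ)+1 : ℕ) + 2 = δ + k + 1 := by push_cast; ring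
  have e3 : δ + 1 + (k:ℚ) + 2 = δ + k + 3 := by ring
  rw [e1, e2, e3, Pq_succ, Pq_succ']
  have e4 : (δ + (k:ℚ) + 1) + 2 = δ + k + 3 := by ring
  rw [e4, factorial_succ_q]
  have h1 := factorial_ne_zero_q k
  have h2 : ((k:ℚ)+1) ≠ 0 := by positivity
  field_simp
  ring

/-- recurrence for `F`. -/
lemma Fq_rec (j : ℕ) (α : ℚ) :
    Fq (j+1) α = Fq (j+1) (α - 2) + 2 * Fq j (α + 1) := by
  cases j with
  | zero => simp [Fq_succ, Fq_zero, Pq_zero]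
  | succ j =>
    rw [Fq_succ, Fq_succ, Fq_succ]
    have e1 : α + ((j:ℕ)+1 : ℕ) + 3 = α + j + 4 := by push_cast; ring
    have e2 : α - 2 + ((j:ℕ)+1 : ℕ) + 3 = α + j + 2 := by push_cast; ring
    have e3 : α + 1 + (j:ℚ) + 3 = α + j + 4 := by ring
    rw [e1, e2, e3, Pq_succ, Pq_succ']
    have e4 : (α + (j:ℚ) + 2) + 2 = α + j + 4 := by ring
    rw [e4, factorial_succ_q (j+1), factorial_succ_q j]
    have h1 := factorial_ne_zero_q j
    have h2 : ((j:ℚ)+1) ≠ 0 := by positivity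
    have h3 : ((j:ℚ)+1+1) ≠ 0 := by positivity
    push_cast
    field_simp
    ring

/-- `F` in terms of `G`. -/
lemma Fq_eq_G (k : ℕ) (γ : ℚ) :
    Fq (k+1) γ = Gq (k+1) γ - 3 * Gq k (γ + 1) := by
  rw [Fq_succ]
  simp only [Gq]
  have e1 : γ + ((k:ℕ)+1 : ℕ) + 2 = γ + k + 3 := by push_cast; ring
  have e2 : γ + 1 + (k:ℚ) + 2 = γ + k + 3 := by ring
  rw [e1, e2, Pq_succ, factorial_succ_q]
  have h1 := factorial_ne_zero_q k
  have h2 : ((k:ℚ)+1) ≠ 0 := by positivity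
  field_simp
  ring

lemma Fq_at_zero (k : ℕ) : Fq (k+1) 0 = 0 := by
  rw [Fq_succ]; simp

noncomputable def Gp (k : ℕ) : Polynomial ℚ :=
  Polynomial.C (((k)! : ℚ))⁻¹ * ∏ i ∈ Finset.range k, (Polynomial.X + Polynomial.C ((k:ℚ) + 2 + 2*i))

noncomputable def Fp (k : ℕ) : Polynomial ℚ :=
  if k = 0 then 1 else
    Polynomial.C (((k)! : ℚ))⁻¹ * Polynomial.X *
      ∏ i ∈ Finset.range (k-1), (Polynomial.X + Polynomial.C ((k:ℚ) + 2 + 2*i))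

lemma Gp_eval (k : ℕ) (α : ℚ) : (Gp k).eval α = Gq k α := by
  rw [Gp, Polynomial.eval_mul, Polynomial.eval_C, Polynomial.eval_prod]
  rw [Finset.prod_congr rfl (fun i (_ : i ∈ Finset.range k) =>
    show Polynomial.eval α (Polynomial.X + Polynomial.C ((k:ℚ) + 2 + 2*i)) = (α + k + 2) + 2*i by
      simp; ring)]
  rw [Gq, Pq, div_eq_inv_mul]

lemma Fp_eval (k : ℕ) (α : ℚ) : (Fp k).eval α = Fq k α := by
  rcases k with _ | k
  · simp [Fp, Fq_zero]
  · rw [Fp, if_neg (Nat.succ_ne_zero k), Fq, if_neg (Nat.succ_ne_zero k)]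
    simp only [Nat.add_sub_cancel]
    rw [Polynomial.eval_mul, Polynomial.eval_mul, Polynomial.eval_C, Polynomial.eval_X,
      Polynomial.eval_prod]
    rw [Finset.prod_congr rfl (fun i (_ : i ∈ Finset.range k) =>
      show Polynomial.eval α (Polynomial.X + Polynomial.C (((((k:ℕ)+1:ℕ)):ℚ) + 2 + 2*(i:ℚ))) =
        (α + (((k:ℕ)+1:ℕ):ℚ) + 2) + 2*(i:ℚ) from by simp; ring)]
    rw [Pq, div_eq_inv_mul]
    ring

/-- Rothe-type convolution of `F` against `G`. -/
lemma conv_FG (k : ℕ) : ∀ (α γ : ℚ),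
    (∑ j ∈ Finset.range (k+1), Fq j α * Gq (k-j) γ) = Gq k (α+γ) := by
  induction k with
  | zero => intro α γ; simp [Fq_zero, Gq_zero]
  | succ k ih =>
    intro α γ
    have hstep : ∀ a : ℚ, (∑ j ∈ Finset.range (k+2), Fq j a * Gq (k+1-j) γ) =
        (∑ j ∈ Finset.range (k+2), Fq j (a-2) * Gq (k+1-j) γ) +
          2 * (∑ j ∈ Finset.range (k+1), Fq j (a+1) * Gq (k-j) γ) := by
      intro a
      rw [Finset.sum_range_succ' (fun j => Fq j a * Gq (k+1-j) γ) (k+1),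
          Finset.sum_range_succ' (fun j => Fq j (a-2) * Gq (k+1-j) γ) (k+1)]
      have hcong : ∀ j ∈ Finset.range (k+1),
          Fq (j+1) a * Gq (k+1-(j+1)) γ =
          Fq (j+1) (a-2) * Gq (k+1-(j+1)) γ + 2*(Fq j (a+1) * Gq (k-j) γ) := by
        intro j hj
        have hkj : k+1-(j+1) = k - j := by omega
        rw [hkj, Fq_rec j a]; ring
      rw [Finset.sum_congr rfl hcong, Finset.sum_add_distrib]
      simp only [Fq_zero, one_mul, Finset.mul_sum]
      ring
    set Tp : Polynomial ℚ :=
      (∑ j ∈ Finset.range (k+2), Polynomial.C (Gq (k+1-j) γ) * Fp j) -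
        (Gp (k+1)).comp (Polynomial.X + Polynomial.C γ) with hTp
    have hTeval : ∀ a : ℚ, Tp.eval a =
        (∑ j ∈ Finset.range (k+2), Fq j a * Gq (k+1-j) γ) - Gq (k+1) (a+γ) := by
      intro a
      rw [hTp, Polynomial.eval_sub, Polynomial.eval_finset_sum, Polynomial.eval_comp]
      simp only [Polynomial.eval_mul, Polynomial.eval_C, Polynomial.eval_add, Polynomial.eval_X,
        Fp_eval, Gp_eval]
      rw [Finset.sum_congr rfl (fun j (_ : j ∈ Finset.range (k+2)) =>
        mul_comm (Gq (k+1-j) γ) (Fq j a))]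
    have hTstep : ∀ a : ℚ, Tp.eval a = Tp.eval (a-2) := by
      intro a
      rw [hTeval, hTeval, hstep a, ih (a+1) γ, Gq_pascal k (a+γ)]
      have e1 : a + γ - 2 = a - 2 + γ := by ring
      have e2 : a + γ + 1 = a + 1 + γ := by ring
      rw [e1, e2]; ring
    have hT0 : Tp.eval 0 = 0 := by
      rw [hTeval]
      have hs : (∑ j ∈ Finset.range (k+2), Fq j 0 * Gq (k+1-j) γ) = Gq (k+1) γ := by
        rw [Finset.sum_eq_single 0]
        · simp [Fq_zero]
        · intro j hj hne
          obtain ⟨j', rfl⟩ : ∃ j', j = j'+1 := ⟨j-1, by omega⟩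
          simp [Fq_at_zero]
        · simp
      rw [hs]; simp
    have hTn : ∀ n : ℕ, Tp.eval (2*(n:ℚ)) = 0 := by
      intro n
      induction n with
      | zero => simpa using hT0
      | succ n ihn =>
        have h := hTstep (2*((n:ℚ)+1))
        have e : 2*((n:ℚ)+1) - 2 = 2*(n:ℚ) := by ring
        rw [e] at h
        push_cast
        exact h.trans ihn
    have hTzero : Tp = 0 := by
      apply Polynomial.eq_zero_of_infinite_isRoot
      apply Set.infinite_of_injective_forall_mem (f := fun n : ℕ => (2*n : ℚ))
      · intro a b hab
        simp only at hab
        exact_mod_cast (mul_right_injective₀ (by norm_num : (2:ℚ) ≠ 0)) hab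
      · intro n
        exact hTn n
    have := congrArg (Polynomial.eval α) hTzero
    rw [hTeval α] at this
    simp only [Polynomial.eval_zero] at this
    linarith [this]

/-- Rothe–Hagen convolution of `F` with itself. -/
lemma conv_FF (k : ℕ) (α γ : ℚ) :
    (∑ j ∈ Finset.range (k+1), Fq j α * Fq (k-j) γ) = Fq k (α+γ) := by
  rcases k with _ | k
  · simp [Fq_zero]
  · rw [Finset.sum_range_succ]
    have hcong : ∀ j ∈ Finset.range (k+1),
        Fq j α * Fq (k+1-j) γ =
          Fq j α * Gq (k+1-j) γ - 3 * (Fq j α * Gq (k-j) (γ+1)) := by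
      intro j hj
      have hj' : j ≤ k := by simpa [Nat.lt_succ_iff] using hj
      have e1 : k+1-j = (k-j)+1 := by omega
      rw [e1, Fq_eq_G (k-j) γ]
      ring
    rw [Finset.sum_congr rfl hcong, Finset.sum_sub_distrib]
    simp only [Nat.sub_self, Fq_zero, mul_one]
    have h1 : (∑ j ∈ Finset.range (k+1), Fq j α * Gq (k+1-j) γ) + Fq (k+1) α =
        Gq (k+1) (α+γ) := by
      rw [← conv_FG (k+1) α γ]
      rw [Finset.sum_range_succ (fun j => Fq j α * Gq (k+1-j) γ) (k+1)]
      simp [Gq_zero]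
    have h2 : (∑ j ∈ Finset.range (k+1), 3 * (Fq j α * Gq (k-j) (γ+1))) =
        3 * Gq k (α+γ+1) := by
      rw [← Finset.mul_sum, conv_FG k α (γ+1)]
      have e : α + (γ+1) = α+γ+1 := by ring
      rw [e]
    have h3 : Fq (k+1) (α+γ) = Gq (k+1) (α+γ) - 3 * Gq k (α+γ+1) := Fq_eq_G k (α+γ)
    rw [h2, h3]
    linarith [h1]

lemma dfac_two (n : ℕ) : (n+2)‼ = (n+2) * n‼ := Nat.doubleFactorial_add_two n

lemma dfac_prod (a j : ℕ) : ((a + 2*j)‼ : ℚ) = (a‼ : ℚ) * Pq j ((a:ℚ) + 2) := by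
  induction j with
  | zero => simp [Pq_zero]
  | succ j ih =>
    have e : a + 2*(j+1) = (a + 2*j) + 2 := by omega
    rw [e, dfac_two, Pq_succ]
    push_cast
    rw [ih]
    push_cast
    ring

lemma dfac_ne_zero (n : ℕ) : ((n‼ : ℕ) : ℚ) ≠ 0 := by
  exact_mod_cast (Nat.doubleFactorial_pos n).ne'

lemma F_one (k : ℕ) : Fq k 1 = ((3*k - 1)‼ : ℚ) / ((k)! * ((k+1)‼ : ℚ)) := by
  cases k with
  | zero => simp [Fq_zero]
  | succ k =>
    rw [Fq_succ, one_mul]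
    have e1 : (1:ℚ) + (k:ℚ) + 3 = ((k+2 : ℕ) : ℚ) + 2 := by push_cast; ring
    rw [e1]
    have e2 : (3*(k+1) - 1 : ℕ) = (k+2) + 2*k := by omega
    rw [e2, dfac_prod (k+2) k]
    have e3 : (k+1+1 : ℕ) = k+2 := by omega
    rw [e3]
    have h1 := factorial_ne_zero_q (k+1)
    have h2 := dfac_ne_zero (k+2)
    field_simp

lemma F_nat (m k : ℕ) (hm : 1 ≤ m) :
    Fq k (m:ℚ) = (m:ℚ) * ((m + 3*k - 2)‼ : ℚ) / ((k)! * ((m+k)‼ : ℚ)) := by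
  cases k with
  | zero =>
    rw [Fq_zero]
    rcases m with _ | _ | m
    · omega
    · norm_num [Nat.doubleFactorial]
    · have e : (m + 2 + 3*0 - 2 : ℕ) = m := by omega
      rw [e]
      have e2 : (m + 2 + 0 : ℕ) = m + 2 := by omega
      rw [e2, dfac_two]
      have h2 := dfac_ne_zero m
      have h3 : ((m:ℚ) + 2) ≠ 0 := by positivity
      push_cast
      field_simp
      norm_num [Nat.factorial]
  | succ k =>
    rw [Fq_succ]
    have e1 : (m:ℚ) + (k:ℚ) + 3 = ((m+k+1 : ℕ) : ℚ) + 2 := by push_cast; ring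
    rw [e1]
    have e2 : (m + 3*(k+1) - 2 : ℕ) = (m+k+1) + 2*k := by omega
    rw [e2, dfac_prod (m+k+1) k]
    have e3 : (m + (k+1) : ℕ) = m+k+1 := by omega
    rw [e3]
    have h1 := factorial_ne_zero_q (k+1)
    have h2 := dfac_ne_zero (m+k+1)
    field_simp

/-- The coefficient function for `hSeries ^ m`. -/
noncomputable def cfn (m n : ℕ) : ℚ :=
  if m ≤ n ∧ (n - m) % 3 = 0 then 4^((n-m)/3) * Fq ((n-m)/3) (m:ℚ) else 0

lemma cfn_eq_zero {m n : ℕ} (h : ¬ (m ≤ n ∧ (n - m) % 3 = 0)) : cfn m n = 0 := if_neg h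

lemma cfn_pos (m k : ℕ) : cfn m (m + 3*k) = 4^k * Fq k (m:ℚ) := by
  rw [cfn, if_pos (by omega)]
  have e : (m + 3*k - m)/3 = k := by omega
  rw [e]

lemma hSeries_coeff (n : ℕ) : PowerSeries.coeff n hSeries = cfn 1 n := by
  rw [hSeries, PowerSeries.coeff_mk, cfn]
  by_cases h : n % 3 = 1
  · rw [if_pos h, if_pos (by omega)]
    have e : (n - 1)/3 = (n - 1)/3 := rfl
    rw [show ((1:ℕ):ℚ) = 1 from by norm_num, F_one ((n-1)/3), mul_div_assoc]
  · rw [if_neg h, if_neg (by omega)]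

lemma coeff_pow (m : ℕ) (hm : 1 ≤ m) (n : ℕ) :
    PowerSeries.coeff n (hSeries ^ m) = cfn m n := by
  induction m, hm using Nat.le_induction generalizing n with
  | base => rw [pow_one]; exact hSeries_coeff n
  | succ m hm ih =>
    rw [pow_succ, PowerSeries.coeff_mul, Finset.Nat.sum_antidiagonal_eq_sum_range_succ_mk]
    have hterm : ∀ i ∈ Finset.range (n+1),
        PowerSeries.coeff (i, n-i).1 (hSeries^m) * PowerSeries.coeff (i, n-i).2 hSeries
          = cfn m i * cfn 1 (n-i) := by
      intro i _
      rw [ih i, hSeries_coeff]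
    rw [Finset.sum_congr rfl hterm]
    by_cases hex : ∃ k, n = (m+1) + 3*k
    · obtain ⟨k, rfl⟩ := hex
      have hr : cfn (m+1) (m+1+3*k) = 4^k * Fq k ((m:ℚ)+1) := by
        have := cfn_pos (m+1) k
        rw [show ((m+1 : ℕ):ℚ) = (m:ℚ)+1 from by push_cast; ring] at this
        exact this
      rw [hr]
      have hsub : Finset.image (fun u => m + 3*u) (Finset.range (k+1)) ⊆
          Finset.range (m+1+3*k+1) := by
        intro x hx
        simp only [Finset.mem_image, Finset.mem_range] at hx ⊢
        obtain ⟨u, hu, rfl⟩ := hx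
        omega
      have hz : ∀ x ∈ Finset.range (m+1+3*k+1),
          x ∉ Finset.image (fun u => m + 3*u) (Finset.range (k+1)) →
          cfn m x * cfn 1 (m+1+3*k-x) = 0 := by
        intro x hx hnx
        by_cases h1 : m ≤ x ∧ (x - m) % 3 = 0
        · by_cases h2 : 1 ≤ m+1+3*k-x ∧ (m+1+3*k-x-1) % 3 = 0
          · exfalso
            apply hnx
            simp only [Finset.mem_image, Finset.mem_range]
            refine ⟨(x-m)/3, by omega, by omega⟩
          · rw [cfn_eq_zero h2, mul_zero]
        · rw [cfn_eq_zero h1, zero_mul]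
      rw [← Finset.sum_subset hsub hz]
      rw [Finset.sum_image (by intro a _ b _ hab; simp only at hab; omega)]
      have hterm2 : ∀ u ∈ Finset.range (k+1),
          cfn m (m+3*u) * cfn 1 (m+1+3*k-(m+3*u)) =
            4^k * (Fq u (m:ℚ) * Fq (k-u) 1) := by
        intro u hu
        have hu' : u ≤ k := by simpa [Nat.lt_succ_iff] using hu
        have e1 : m+1+3*k-(m+3*u) = 1 + 3*(k-u) := by omega
        rw [e1, cfn_pos m u, cfn_pos 1 (k-u)]
        rw [show ((1:ℕ):ℚ) = 1 from by norm_num]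
        have e2 : (4:ℚ)^u * (4:ℚ)^(k-u) = 4^k := by
          rw [← pow_add]
          congr 1
          omega
        calc 4^u * Fq u (m:ℚ) * (4^(k-u) * Fq (k-u) 1)
            = (4^u * (4:ℚ)^(k-u)) * (Fq u (m:ℚ) * Fq (k-u) 1) := by ring
          _ = 4^k * (Fq u (m:ℚ) * Fq (k-u) 1) := by rw [e2]
      rw [Finset.sum_congr rfl hterm2, ← Finset.mul_sum, conv_FF k (m:ℚ) 1]
    · have hz : ∀ i ∈ Finset.range (n+1), cfn m i * cfn 1 (n-i) = 0 := by
        intro i hi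
        rw [Finset.mem_range] at hi
        by_cases h1 : m ≤ i ∧ (i - m) % 3 = 0
        · by_cases h2 : 1 ≤ n-i ∧ (n-i-1) % 3 = 0
          · exfalso
            exact hex ⟨(n-(m+1))/3, by omega⟩
          · rw [cfn_eq_zero h2, mul_zero]
        · rw [cfn_eq_zero h1, zero_mul]
      rw [Finset.sum_eq_zero hz, cfn_eq_zero]
      rintro ⟨h1, h2⟩
      exact hex ⟨(n-(m+1))/3, by omega⟩

theorem coeff_hSeries_pow (m : ℕ) (hm : 1 ≤ m) :
    (∀ n : ℕ, (¬ ∃ k : ℕ, n = m + 3 * k) →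
      PowerSeries.coeff n (hSeries ^ m) = 0) ∧
    (∀ k : ℕ,
      PowerSeries.coeff (m + 3 * k) (hSeries ^ m) =
        (m : ℚ) * 4 ^ k * ((m + 3 * k - 2)‼ : ℚ) / ((k)! * ((m + k)‼ : ℚ))) := by
  constructor
  · intro n hn
    rw [coeff_pow m hm n, cfn_eq_zero]
    rintro ⟨h1, h2⟩
    exact hn ⟨(n-m)/3, by omega⟩
  · intro k
    rw [coeff_pow m hm, cfn_pos m k, F_nat m k hm]
    ring
end

section
/- For all integers m ≥ 1 and k ≥ 1, (2m+3k−2)!! · Σ_{j=1}^{k} (2m+3j)/((k−j)!·(2m+2j+k)!!) = (2m+3k−2)!!/((k−1)!·(2m+k)!!). -/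
/-!
STATEMENT 5: for all integers `m ≥ 1`, `k ≥ 1`,
`(2m+3k−2)!! · Σ_{j=1}^{k} (2m+3j)/((k−j)!·(2m+2j+k)!!)
   = (2m+3k−2)!!/((k−1)!·(2m+k)!!)`,
an identity of positive rationals; `!!` is the double factorial with
`0!! = 1!! = 1`.
-/

open scoped Nat

theorem doubleFactorial_sum_identity (m k : ℕ) (hm : 1 ≤ m) (hk : 1 ≤ k) :
    ((2 * m + 3 * k - 2)‼ : ℚ) *
      ∑ j ∈ Finset.Icc 1 k,
        ((2 * m + 3 * j : ℕ) : ℚ) / (((k - j)! : ℚ) * ((2 * m + 2 * j + k)‼ : ℚ)) =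
    ((2 * m + 3 * k - 2)‼ : ℚ) / (((k - 1)! : ℚ) * ((2 * m + k)‼ : ℚ)) := by
  have hsum : (∑ j ∈ Finset.Icc 1 k,
      ((2 * m + 3 * j : ℕ) : ℚ) / (((k - j)! : ℚ) * ((2 * m + 2 * j + k)‼ : ℚ)))
      = 1 / (((k - 1)! : ℚ) * ((2 * m + k)‼ : ℚ)) := by
    set F : ℕ → ℚ := fun i =>
      ((k - i : ℕ) : ℚ) / (((k - i)! : ℚ) * ((2 * m + 2 * i + k)‼ : ℚ)) with hF
    have step : ∀ i ∈ Finset.range k,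
        ((2 * m + 3 * (1 + i) : ℕ) : ℚ) /
          (((k - (1 + i))! : ℚ) * ((2 * m + 2 * (1 + i) + k)‼ : ℚ))
        = F i - F (i + 1) := by
      intro i hi
      rw [Finset.mem_range] at hi
      obtain ⟨d, rfl⟩ : ∃ d, k = i + d + 1 := ⟨k - i - 1, by omega⟩
      have e1 : i + d + 1 - (1 + i) = d := by omega
      have e2 : i + d + 1 - i = d + 1 := by omega
      have e3 : i + d + 1 - (i + 1) = d := by omega
      have e4 : 2 * m + 2 * (1 + i) + (i + d + 1)
          = (2 * m + 2 * i + (i + d + 1)) + 2 := by ring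
      have e5 : 2 * m + 2 * (i + 1) + (i + d + 1)
          = (2 * m + 2 * i + (i + d + 1)) + 2 := by ring
      simp only [hF, e1, e2, e3, e4, e5, Nat.doubleFactorial_add_two, Nat.factorial_succ]
      have h1 : ((d ! : ℚ)) ≠ 0 := Nat.cast_ne_zero.mpr (Nat.factorial_ne_zero d)
      have h2 : (((2 * m + 2 * i + (i + d + 1))‼ : ℕ) : ℚ) ≠ 0 :=
        Nat.cast_ne_zero.mpr (Nat.doubleFactorial_pos _).ne'
      have h3 : ((2 * m + 2 * i + (i + d + 1) : ℕ) : ℚ) + 2 ≠ 0 := by positivity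
      push_cast
      field_simp
      ring
    rw [← Finset.Ico_add_one_right_eq_Icc, Finset.sum_Ico_eq_sum_range]
    simp only [Nat.succ_sub_one, Nat.add_sub_cancel]
    rw [Finset.sum_congr rfl step, Finset.sum_range_sub']
    have hFk : F k = 0 := by simp [hF]
    have hk1 : (k)! = k * (k - 1)! := by
      cases k with
      | zero => omega
      | succ n => simp [Nat.factorial_succ]
    rw [hFk, sub_zero, hF]
    simp only [Nat.sub_zero, mul_zero, add_zero, hk1]
    have hkQ : (k : ℚ) ≠ 0 := Nat.cast_ne_zero.mpr (by omega)
    have h1 : (((k - 1)! : ℕ) : ℚ) ≠ 0 := Nat.cast_ne_zero.mpr (Nat.factorial_ne_zero _)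
    have h2 : (((2 * m + k)‼ : ℕ) : ℚ) ≠ 0 :=
      Nat.cast_ne_zero.mpr (Nat.doubleFactorial_pos _).ne'
    push_cast
    field_simp
  rw [hsum, mul_one_div]
end

section
/- Define U₀(x,y) = (h−y)/(2h)·√(1−4h²y) − (x−y)/(2x) where h = h(x) satisfies 8h³x² − h² + x² = 0 with h(x) = x + O(x⁴) a formal power series. Then U₀ satisfies the equation U₀(x,y) = x·y² + (x/y)·(U₀(x,y) − y·L₀(x)) + (x/y)·U₀(x,y)², where L₀(x) is the coefficient of y in U₀(x,y). -/
/-!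
STATEMENT 6: Let `h = h(x)` be the power-series root of `8h³x² − h² + x² = 0`
with `h = x + O(x⁴)`.  Work in `(ℚ⟦x⟧)⟦y⟧`; let `s = √(1−4h²y)` be the unique
series with `s² = 1 − 4h²y` and constant term (in `y`) equal to `1`, and let
`U₀` be defined by `U₀ = (h−y)/(2h)·√(1−4h²y) − (x−y)/(2x)`, encoded
denominator-free as `2hx·U₀ = x(h−y)s − h(x−y)`.
Then `U₀` is divisible by `y` and satisfies (after multiplying through by `y`)
`y·U₀ = x·y³ + x·(U₀ − y·L₀) + x·U₀²` where `L₀ = [y¹]U₀`.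
-/

theorem U0_functional_equation
    (h : PowerSeries ℚ)
    (hcubic : 8 * h ^ 3 * (PowerSeries.X : PowerSeries ℚ) ^ 2 - h ^ 2
        + (PowerSeries.X : PowerSeries ℚ) ^ 2 = 0)
    (h0 : PowerSeries.coeff 0 h = 0) (h1 : PowerSeries.coeff 1 h = 1)
    (h2 : PowerSeries.coeff 2 h = 0) (h3 : PowerSeries.coeff 3 h = 0)
    (s U₀ : PowerSeries (PowerSeries ℚ))
    (hs0 : PowerSeries.constantCoeff s = 1)
    (hs : s ^ 2 = 1 - 4 * PowerSeries.C (h ^ 2) * PowerSeries.X)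
    (hU : 2 * PowerSeries.C h
            * PowerSeries.C (PowerSeries.X : PowerSeries ℚ) * U₀
        = PowerSeries.C (PowerSeries.X : PowerSeries ℚ)
            * (PowerSeries.C h - PowerSeries.X) * s
          - PowerSeries.C h
            * (PowerSeries.C (PowerSeries.X : PowerSeries ℚ)
                - PowerSeries.X)) :
    PowerSeries.constantCoeff U₀ = 0 ∧
    PowerSeries.X * U₀
      = PowerSeries.C (PowerSeries.X : PowerSeries ℚ)
          * PowerSeries.X ^ 3
        + PowerSeries.C (PowerSeries.X : PowerSeries ℚ)
          * (U₀ - PowerSeries.X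
              * PowerSeries.C
                  (PowerSeries.coeff 1 U₀))
        + PowerSeries.C (PowerSeries.X : PowerSeries ℚ)
          * U₀ ^ 2 := by
  
  -- h ≠ 0
  have hhne : h ≠ 0 := fun hz => by simp [hz] at h1
  have h2ne : (2 : PowerSeries ℚ) ≠ 0 := fun hz => by
    have := congrArg (PowerSeries.constantCoeff (R := ℚ)) hz
    rw [map_ofNat] at this
    norm_num at this
  have hAne0 : (2 * h * PowerSeries.X : PowerSeries ℚ) ≠ 0 :=
    mul_ne_zero (mul_ne_zero h2ne hhne) PowerSeries.X_ne_zero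
  -- part 1
  have hc0 : PowerSeries.constantCoeff U₀ = 0 := by
    have e := congrArg (PowerSeries.constantCoeff) hU
    simp only [map_mul, map_sub, map_ofNat, PowerSeries.constantCoeff_C,
      PowerSeries.constantCoeff_X, hs0] at e
    have := mul_left_cancel₀ hAne0
      (show (2 * h * PowerSeries.X) * PowerSeries.constantCoeff U₀
          = (2 * h * PowerSeries.X) * 0 by linear_combination e)
    simpa using this
  refine ⟨hc0, ?_⟩
  -- s₁ = -2h²
  have hs1 : PowerSeries.coeff 1 s = -(2 * h ^ 2) := by
    have e := congrArg (PowerSeries.coeff 1) hs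
    rw [pow_two, PowerSeries.coeff_one_mul] at e
    simp only [map_sub, map_mul, map_one, map_ofNat, hs0, mul_one,
      PowerSeries.coeff_one_X, PowerSeries.coeff_C_mul, PowerSeries.coeff_one_mul,
      PowerSeries.constantCoeff_X, PowerSeries.constantCoeff_C, PowerSeries.coeff_C,
      PowerSeries.coeff_one] at e
    norm_num at e
    exact mul_left_cancel₀ h2ne (by linear_combination e)
  -- L relation
  have hL : 2 * h * PowerSeries.X * PowerSeries.coeff 1 U₀
      = h - PowerSeries.X - 2 * h ^ 3 * PowerSeries.X := by
    have e := congrArg (PowerSeries.coeff 1) hU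
    simp only [map_sub, PowerSeries.coeff_one_mul, map_mul, map_ofNat,
      PowerSeries.constantCoeff_C, PowerSeries.constantCoeff_X, hs0, hc0,
      PowerSeries.coeff_one_X, PowerSeries.coeff_C, PowerSeries.coeff_C_mul,
      map_sub, map_one, hs1, PowerSeries.coeff_one] at e
    norm_num at e
    linear_combination e
  have hL' : 2 * (PowerSeries.C h) * (PowerSeries.C (PowerSeries.X : PowerSeries ℚ)) * (PowerSeries.C (PowerSeries.coeff 1 U₀)) = (PowerSeries.C h) - (PowerSeries.C (PowerSeries.X : PowerSeries ℚ)) - 2 * (PowerSeries.C h) ^ 3 * (PowerSeries.C (PowerSeries.X : PowerSeries ℚ)) := by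
    have e := congrArg (PowerSeries.C) hL
    simpa only [map_mul, map_sub, map_pow, map_ofNat] using e
  have hc4 : 8 * (PowerSeries.C h) ^ 3 * (PowerSeries.C (PowerSeries.X : PowerSeries ℚ)) ^ 2 - (PowerSeries.C h) ^ 2 + (PowerSeries.C (PowerSeries.X : PowerSeries ℚ)) ^ 2 = 0 := by
    have e := congrArg (PowerSeries.C) hcubic
    simpa only [map_add, map_sub, map_mul, map_pow, map_ofNat, map_zero] using e
  have hs' : s ^ 2 = 1 - 4 * (PowerSeries.C h) ^ 2 * (PowerSeries.X : PowerSeries (PowerSeries ℚ)) := by rw [hs, map_pow]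
  have hAne : (2 * (PowerSeries.C h) * (PowerSeries.C (PowerSeries.X : PowerSeries ℚ)) : PowerSeries (PowerSeries ℚ)) ≠ 0 := by
    intro hz
    apply hAne0
    apply PowerSeries.C_injective (R := PowerSeries ℚ)
    rw [map_zero, map_mul, map_mul, map_ofNat]
    exact hz
  have key : (2 * (PowerSeries.C h) * (PowerSeries.C (PowerSeries.X : PowerSeries ℚ))) ^ 2 * ((PowerSeries.X : PowerSeries (PowerSeries ℚ)) * U₀)
      = (2 * (PowerSeries.C h) * (PowerSeries.C (PowerSeries.X : PowerSeries ℚ))) ^ 2 * ((PowerSeries.C (PowerSeries.X : PowerSeries ℚ)) * (PowerSeries.X : PowerSeries (PowerSeries ℚ)) ^ 3 + (PowerSeries.C (PowerSeries.X : PowerSeries ℚ)) * (U₀ - (PowerSeries.X : PowerSeries (PowerSeries ℚ)) * (PowerSeries.C (PowerSeries.coeff 1 U₀))) + (PowerSeries.C (PowerSeries.X : PowerSeries ℚ)) * U₀ ^ 2) := by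
    linear_combination
      (2 * (PowerSeries.C h) * (PowerSeries.C (PowerSeries.X : PowerSeries ℚ)) * (PowerSeries.X : PowerSeries (PowerSeries ℚ)) - 2 * (PowerSeries.C h) * (PowerSeries.C (PowerSeries.X : PowerSeries ℚ)) * (PowerSeries.C (PowerSeries.X : PowerSeries ℚ))
        - (PowerSeries.C (PowerSeries.X : PowerSeries ℚ)) * (2 * (PowerSeries.C h) * (PowerSeries.C (PowerSeries.X : PowerSeries ℚ)) * U₀ + ((PowerSeries.C (PowerSeries.X : PowerSeries ℚ)) * ((PowerSeries.C h) - (PowerSeries.X : PowerSeries (PowerSeries ℚ))) * s - (PowerSeries.C h) * ((PowerSeries.C (PowerSeries.X : PowerSeries ℚ)) - (PowerSeries.X : PowerSeries (PowerSeries ℚ)))))) * hU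
      + (-((PowerSeries.C (PowerSeries.X : PowerSeries ℚ)) ^ 3 * ((PowerSeries.C h) - (PowerSeries.X : PowerSeries (PowerSeries ℚ))) ^ 2)) * hs'
      + (2 * (PowerSeries.C h) * (PowerSeries.C (PowerSeries.X : PowerSeries ℚ)) ^ 2 * (PowerSeries.X : PowerSeries (PowerSeries ℚ))) * hL'
      + (-((PowerSeries.C (PowerSeries.X : PowerSeries ℚ)) * (PowerSeries.X : PowerSeries (PowerSeries ℚ)) ^ 2)) * hc4
  exact mul_left_cancel₀ (pow_ne_zero 2 hAne) key
end

section
/- Let ζ(t) be as above and set, in the ring of formal power series in t with parameter y (a formal variable adjoined so that expressions like (1−4(1+ζ)y)^{−3/2} are power series in y with coefficients power series in t): λ = 16y(1+ζ)^{5/2}/((2−ζ)(1−4(1+ζ)y)^{3/2}), A = 1/(2√(1−4(1+ζ)y)), B = (ζ − 8(1+ζ)y)·√(1−4(1+ζ)y)/(16(1+ζ)^{3/2}). Then dA/dt = λ and dB/dt = A, i.e. A is an antiderivative D^{−1}(λ) and B is an antiderivative D^{−2}(λ). -/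
/-!
STATEMENT 10: work in `R = (ℚ⟦y⟧)⟦t⟧` (outer variable `t`, so that the formal
derivative in `t` is available, with `y` embedded as the constant
`Y = C(X : ℚ⟦y⟧)`).  Let `ζ = ζ(t)` satisfy `ζ(0)=0`, `ζ = 8t(1+ζ)^{3/2}`
(with `(1+ζ)^{3/2}` the series `w₃`, `w₃² = (1+ζ)³`, constant term `1`),
let `w₅ = (1+ζ)^{5/2}` (`w₅² = (1+ζ)⁵`, constant term `1`),
let `S = √(1−4(1+ζ)y)` (`S² = 1−4(1+ζ)Y`, with constant-constant term `1`),
and define (denominator-free):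
`λ·(2−ζ)·S³ = 16·y·(1+ζ)^{5/2}`,  `A = 1/(2S)` i.e. `2·A·S = 1`,
`B = (ζ−8(1+ζ)y)·S/(16(1+ζ)^{3/2})` i.e. `16·w₃·B = (ζ−8(1+ζ)Y)·S`.
Then `dA/dt = λ` and `dB/dt = A`.
-/

theorem antiderivatives_of_lambda
    (ζ w₃ w₅ S lam A B : PowerSeries (PowerSeries ℚ))
    (Y : PowerSeries (PowerSeries ℚ))
    (hY : Y = PowerSeries.C (R := PowerSeries ℚ) (PowerSeries.X : PowerSeries ℚ))
    (hζ0 : PowerSeries.constantCoeff (R := PowerSeries ℚ) ζ = 0)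
    (hw₃0 : PowerSeries.constantCoeff (R := PowerSeries ℚ) w₃ = 1)
    (hw₃ : w₃ ^ 2 = (1 + ζ) ^ 3)
    (hζ : ζ = 8 * PowerSeries.X * w₃)
    (hw₅0 : PowerSeries.constantCoeff (R := PowerSeries ℚ) w₅ = 1)
    (hw₅ : w₅ ^ 2 = (1 + ζ) ^ 5)
    (hS0 : PowerSeries.constantCoeff (R := ℚ)
        (PowerSeries.constantCoeff (R := PowerSeries ℚ) S) = 1)
    (hS : S ^ 2 = 1 - 4 * (1 + ζ) * Y)
    (hlam : lam * ((2 - ζ) * S ^ 3) = 16 * Y * w₅)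
    (hA : 2 * A * S = 1)
    (hB : 16 * w₃ * B = (ζ - 8 * (1 + ζ) * Y) * S) :
    PowerSeries.derivative (PowerSeries ℚ) A = lam ∧
    PowerSeries.derivative (PowerSeries ℚ) B = A := by
  set D := PowerSeries.derivative (PowerSeries ℚ) with hD
  -- derivative of Y is zero
  have hDY : D Y = 0 := by rw [hY]; simp [hD]
  have hd2 : D (2 : PowerSeries (PowerSeries ℚ)) = 0 := by
    rw [hD, show (2 : PowerSeries (PowerSeries ℚ))
        = PowerSeries.C (R := PowerSeries ℚ) 2 from (map_ofNat _ 2).symm,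
      PowerSeries.derivative_C]
  have hd4 : D (4 : PowerSeries (PowerSeries ℚ)) = 0 := by
    rw [hD, show (4 : PowerSeries (PowerSeries ℚ))
        = PowerSeries.C (R := PowerSeries ℚ) 4 from (map_ofNat _ 4).symm,
      PowerSeries.derivative_C]
  have hd8 : D (8 : PowerSeries (PowerSeries ℚ)) = 0 := by
    rw [hD, show (8 : PowerSeries (PowerSeries ℚ))
        = PowerSeries.C (R := PowerSeries ℚ) 8 from (map_ofNat _ 8).symm,
      PowerSeries.derivative_C]
  have hd16 : D (16 : PowerSeries (PowerSeries ℚ)) = 0 := by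
    rw [hD, show (16 : PowerSeries (PowerSeries ℚ))
        = PowerSeries.C (R := PowerSeries ℚ) 16 from (map_ofNat _ 16).symm,
      PowerSeries.derivative_C]
  have hDY' : PowerSeries.derivative (PowerSeries ℚ) Y = 0 := hDY
  have hd2' : PowerSeries.derivative (PowerSeries ℚ) (2 : PowerSeries (PowerSeries ℚ)) = 0 := hd2
  have hd4' : PowerSeries.derivative (PowerSeries ℚ) (4 : PowerSeries (PowerSeries ℚ)) = 0 := hd4
  have hd8' : PowerSeries.derivative (PowerSeries ℚ) (8 : PowerSeries (PowerSeries ℚ)) = 0 := hd8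
  have hd16' : PowerSeries.derivative (PowerSeries ℚ) (16 : PowerSeries (PowerSeries ℚ)) = 0 := hd16
  -- differentiated hypotheses
  have h1 : 2 * w₃ * D w₃ = 3 * (1 + ζ) ^ 2 * D ζ := by
    have := congrArg D hw₃
    simp only [hD, Derivation.leibniz, Derivation.leibniz_pow, map_add, map_sub, map_one,
      smul_eq_mul, nsmul_eq_mul, map_mul, Derivation.map_one_eq_zero, hd2, hd4, hd8, hd16, hd2', hd4', hd8', hd16'] at this
    linear_combination this
  have h2 : D ζ = 8 * w₃ + 8 * PowerSeries.X * D w₃ := by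
    have := congrArg D hζ
    simp only [hD, Derivation.leibniz, Derivation.leibniz_pow, map_add, map_sub, map_one,
      smul_eq_mul, nsmul_eq_mul, map_mul, Derivation.map_one_eq_zero, hd2, hd4, hd8, hd16, hd2', hd4', hd8', hd16',
      PowerSeries.derivative_X] at this
    linear_combination this
  have h3 : 2 * S * D S = -(4 * D ζ * Y) := by
    have := congrArg D hS
    simp only [hD, Derivation.leibniz, Derivation.leibniz_pow, map_add, map_sub, map_one,
      smul_eq_mul, nsmul_eq_mul, map_mul, Derivation.map_one_eq_zero, hDY, hd2, hd4, hd8, hd16, hDY', hd2', hd4', hd8', hd16', mul_zero, zero_add, add_zero, zero_sub, sub_zero] at this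
    linear_combination this
  have h4 : 2 * (D A * S + A * D S) = 0 := by
    have := congrArg D hA
    simp only [hD, Derivation.leibniz, Derivation.leibniz_pow, map_add, map_sub, map_one,
      smul_eq_mul, nsmul_eq_mul, map_mul, Derivation.map_one_eq_zero, hd2, hd4, hd8, hd16, hd2', hd4', hd8', hd16'] at this
    linear_combination this
  have h5 : 16 * (D w₃ * B + w₃ * D B)
      = (D ζ - 8 * (D ζ * Y)) * S + (ζ - 8 * (1 + ζ) * Y) * D S := by
    have := congrArg D hB
    simp only [hD, Derivation.leibniz, Derivation.leibniz_pow, map_add, map_sub, map_one,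
      smul_eq_mul, nsmul_eq_mul, map_mul, Derivation.map_one_eq_zero, hDY, hd2, hd4, hd8, hd16, hDY', hd2', hd4', hd8', hd16', mul_zero, zero_add, add_zero, zero_sub, sub_zero] at this
    linear_combination this
  -- nonvanishing facts
  have hCC : ∀ f : PowerSeries (PowerSeries ℚ),
      PowerSeries.constantCoeff (R := PowerSeries ℚ) f ≠ 0 → f ≠ 0 := by
    intro f h hf; exact h (by rw [hf, map_zero])
  have h1ζ : (1 + ζ : PowerSeries (PowerSeries ℚ)) ≠ 0 := by
    apply hCC; rw [map_add, map_one, hζ0, add_zero]; exact one_ne_zero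
  have hnum : ∀ n : ℕ, (n : ℚ) ≠ 0 → ((n : PowerSeries ℚ) ≠ 0) := by
    intro n hn h
    have := congrArg (PowerSeries.constantCoeff (R := ℚ)) h
    rw [map_natCast, map_zero] at this; exact hn this
  have h2ζ : (2 - ζ : PowerSeries (PowerSeries ℚ)) ≠ 0 := by
    apply hCC; rw [map_sub, hζ0, sub_zero, map_ofNat]
    exact_mod_cast hnum 2 (by norm_num)
  have hw₃ne : (w₃ : PowerSeries (PowerSeries ℚ)) ≠ 0 := by
    apply hCC; rw [hw₃0]; exact one_ne_zero
  have hSne : (S : PowerSeries (PowerSeries ℚ)) ≠ 0 := by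
    apply hCC; intro h
    rw [h, map_zero] at hS0; exact one_ne_zero hS0.symm
  have h2ne : (2 : PowerSeries (PowerSeries ℚ)) ≠ 0 := by
    apply hCC; rw [map_ofNat]; exact_mod_cast hnum 2 (by norm_num)
  have h16ne : (16 : PowerSeries (PowerSeries ℚ)) ≠ 0 := by
    apply hCC; rw [map_ofNat]; exact_mod_cast hnum 16 (by norm_num)
  -- w₅ = w₃ * (1+ζ)
  have hE7 : w₅ = w₃ * (1 + ζ) := by
    have hz : (w₅ - w₃ * (1 + ζ)) * (w₅ + w₃ * (1 + ζ)) = 0 := by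
      linear_combination hw₅ - (1 + ζ) ^ 2 * hw₃
    rcases mul_eq_zero.mp hz with h | h
    · exact sub_eq_zero.mp h
    · exfalso
      have : PowerSeries.constantCoeff (R := PowerSeries ℚ) (w₅ + w₃ * (1 + ζ)) = 2 := by
        rw [map_add, map_mul, map_add, map_one, hζ0, add_zero, hw₅0, hw₃0]; ring
      rw [h, map_zero] at this
      exact hnum 2 (by norm_num) (by exact_mod_cast this.symm)
  -- the ODE: (2-ζ) ζ' = 16 w₅
  have hE2 : (2 - ζ) * D ζ = 16 * w₅ := by
    have key : (1 + ζ) ^ 2 * ((2 - ζ) * D ζ) = (1 + ζ) ^ 2 * (16 * w₅) := by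
      rw [hE7]
      linear_combination (2 * w₃ ^ 2) * h2 + (8 * PowerSeries.X * w₃) * h1
        - (3 * (1 + ζ) ^ 2 * D ζ) * hζ + (16 * w₃ - 2 * D ζ) * hw₃
    exact mul_left_cancel₀ (pow_ne_zero 2 h1ζ) key
  constructor
  · -- A' = lam
    have key : (2 * ((2 - ζ) * S ^ 4)) * D A = (2 * ((2 - ζ) * S ^ 4)) * lam := by
      linear_combination ((2 - ζ) * S ^ 3) * h4 - ((2 - ζ) * S ^ 2 * A) * h3
        + (4 * S ^ 2 * A * Y) * hE2 + (32 * S * Y * w₅) * hA - (2 * S) * hlam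
    exact mul_left_cancel₀
      (mul_ne_zero h2ne (mul_ne_zero h2ζ (pow_ne_zero 4 hSne))) key
  · -- B' = A
    have key : (32 * (w₃ ^ 3 * S)) * D B = (32 * (w₃ ^ 3 * S)) * A := by
      linear_combination (-(16 * w₃ ^ 3)) * hA + (2 * w₃ ^ 2 * S) * h5
        - (16 * w₃ * S * B) * h1
        - (3 * (1 + ζ) ^ 2 * D ζ * S) * hB
        + (w₃ ^ 2 * (ζ - 8 * (1 + ζ) * Y)) * h3
        + (2 * w₃ ^ 2 * D ζ * (1 - 8 * Y)
            - 3 * (1 + ζ) ^ 2 * D ζ * (ζ - 8 * (1 + ζ) * Y)) * hS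
        + (-(16 * w₃) + 2 * D ζ - 12 * D ζ * Y * (2 + ζ)
            + 96 * D ζ * Y ^ 2 * (1 + ζ)) * hw₃
        + ((1 + ζ) ^ 2) * hE2 + (16 * (1 + ζ) ^ 2) * hE7
    have h32ne : (32 : PowerSeries (PowerSeries ℚ)) ≠ 0 := by
      apply hCC; rw [map_ofNat]; exact_mod_cast hnum 32 (by norm_num)
    exact mul_left_cancel₀
      (mul_ne_zero h32ne (mul_ne_zero (pow_ne_zero 3 hw₃ne) hSne)) key
end

section
/- Let h(x) satisfy 8h³x² − h² + x² = 0 with h = x + O(x⁴), and define U₁(x,y,z) = (1/2)·(z(1−√(1−4h²y)) − y(1−√(1−4h²z)))/((y−z)√(1−4h²y)). Then z·(∂/∂z)U₁(x,y,z) = 4h⁴yz / ((√(1−4h²y)+√(1−4h²z))²·√(1−4h²y)·√(1−4h²z)). -/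
attribute [-instance] PowerSeries.algebraPowerSeries MvPowerSeries.algebraMvPowerSeries


/-!
STATEMENT 17: work in `R = ((ℚ⟦x⟧)⟦y⟧)⟦z⟧` (outer variable `z`, so the formal
partial derivative `∂/∂z` is available; `x`, `y` embedded as constants).
`h` is the power-series root of `8h³x² − h² + x² = 0` with `h = x + O(x⁴)`;
`Sy = √(1−4h²y)`, `Sz = √(1−4h²z)` (squares prescribed, constant terms `1`);
`U₁ = (1/2)(z(1−Sy) − y(1−Sz))/((y−z)Sy)` is encoded denominator-free as
`2(y−z)·Sy·U₁ = z(1−Sy) − y(1−Sz)`.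
The claim `z·∂U₁/∂z = 4h⁴yz/((Sy+Sz)²·Sy·Sz)` is stated after clearing the
(non-zero-divisor) denominator `(Sy+Sz)²·Sy·Sz`.
-/

theorem U1_symmetrization
    (h : PowerSeries ℚ)
    (hcubic : 8 * h ^ 3 * (PowerSeries.X : PowerSeries ℚ) ^ 2 - h ^ 2
        + (PowerSeries.X : PowerSeries ℚ) ^ 2 = 0)
    (h0 : PowerSeries.coeff (R := ℚ) 0 h = 0) (h1 : PowerSeries.coeff (R := ℚ) 1 h = 1)
    (h2 : PowerSeries.coeff (R := ℚ) 2 h = 0) (h3 : PowerSeries.coeff (R := ℚ) 3 h = 0)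
    (H Y Z : PowerSeries (PowerSeries (PowerSeries ℚ)))
    (hH : H = PowerSeries.C (R := PowerSeries (PowerSeries ℚ))
        (PowerSeries.C (R := PowerSeries ℚ) h))
    (hY : Y = PowerSeries.C (R := PowerSeries (PowerSeries ℚ))
        (PowerSeries.X : PowerSeries (PowerSeries ℚ)))
    (hZ : Z = (PowerSeries.X : PowerSeries (PowerSeries (PowerSeries ℚ))))
    (Sy Sz U₁ : PowerSeries (PowerSeries (PowerSeries ℚ)))
    (hSy0 : PowerSeries.constantCoeff (R := ℚ) (PowerSeries.constantCoeff (R := PowerSeries ℚ)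
        (PowerSeries.constantCoeff (R := PowerSeries (PowerSeries ℚ)) Sy)) = 1)
    (hSy : Sy ^ 2 = 1 - 4 * H ^ 2 * Y)
    (hSz0 : PowerSeries.constantCoeff (R := ℚ) (PowerSeries.constantCoeff (R := PowerSeries ℚ)
        (PowerSeries.constantCoeff (R := PowerSeries (PowerSeries ℚ)) Sz)) = 1)
    (hSz : Sz ^ 2 = 1 - 4 * H ^ 2 * Z)
    (hU₁ : 2 * (Y - Z) * Sy * U₁ = Z * (1 - Sy) - Y * (1 - Sz)) :
    Z * PowerSeries.derivative (PowerSeries (PowerSeries ℚ)) U₁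
        * ((Sy + Sz) ^ 2 * Sy * Sz)
      = 4 * H ^ 4 * Y * Z := by
  set D := PowerSeries.derivative (PowerSeries (PowerSeries ℚ)) with hDdef
  have hD2 : D (2 : _) = 0 := by
    rw [show (2 : PowerSeries (PowerSeries (PowerSeries ℚ))) = 1 + 1 by norm_num,
      map_add, Derivation.map_one_eq_zero, add_zero]
  have hD4 : D (4 : _) = 0 := by
    rw [show (4 : PowerSeries (PowerSeries (PowerSeries ℚ))) = 2 * 2 by norm_num,
      Derivation.leibniz, hD2]
    simp
  have hDH : D H = 0 := by rw [hH]; exact PowerSeries.derivative_C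
  have hDY : D Y = 0 := by rw [hY]; exact PowerSeries.derivative_C
  have hDZ : D Z = 1 := by rw [hZ]; exact PowerSeries.derivative_X
  -- nonzero facts
  have haSy : Sy ≠ 0 := by
    intro e; rw [e] at hSy0; simp at hSy0
  have h2ne : (2 : PowerSeries (PowerSeries (PowerSeries ℚ))) ≠ 0 := by
    intro e
    have := congrArg (PowerSeries.constantCoeff (R := ℚ) ∘ PowerSeries.constantCoeff (R := PowerSeries ℚ)
      ∘ PowerSeries.constantCoeff (R := PowerSeries (PowerSeries ℚ))) e
    simp [map_ofNat] at this
  have hHne : H ≠ 0 := by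
    intro e
    rw [e] at hH
    have := congrArg (PowerSeries.coeff (R := ℚ) 1 ∘ PowerSeries.constantCoeff (R := PowerSeries ℚ)
      ∘ PowerSeries.constantCoeff (R := PowerSeries (PowerSeries ℚ))) hH.symm
    simp [h1] at this
  have hYZ : Y - Z ≠ 0 := by
    intro e
    have hyz : Y = Z := by linear_combination e
    rw [hY, hZ] at hyz
    have := congrArg (PowerSeries.coeff (R := PowerSeries (PowerSeries ℚ)) 1) hyz
    simp [PowerSeries.coeff_C] at this
  have hsub : Sz - Sy ≠ 0 := by
    intro e
    have hzz : Sz = Sy := by linear_combination e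
    rw [hzz] at hSz
    have : (4 : PowerSeries (PowerSeries (PowerSeries ℚ))) * H ^ 2 * (Y - Z) = 0 := by
      linear_combination hSy - hSz
    rcases mul_eq_zero.mp this with h' | h'
    · rcases mul_eq_zero.mp h' with h'' | h''
      · refine absurd h'' ?_
        intro e4
        have := congrArg (PowerSeries.constantCoeff (R := ℚ) ∘ PowerSeries.constantCoeff (R := PowerSeries ℚ)
          ∘ PowerSeries.constantCoeff (R := PowerSeries (PowerSeries ℚ))) e4
        simp [map_ofNat] at this
      · exact pow_ne_zero 2 hHne h''
    · exact hYZ h'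
  -- differentiate the hypotheses
  have dSy := congrArg D hSy
  simp only [Derivation.leibniz, Derivation.leibniz_pow, map_sub, map_add,
    Derivation.map_one_eq_zero, hD2, hD4, hDH, hDY, hDZ,
    smul_eq_mul, nsmul_eq_mul, mul_zero, zero_mul, add_zero, zero_add, mul_one] at dSy
  have dSz := congrArg D hSz
  simp only [Derivation.leibniz, Derivation.leibniz_pow, map_sub, map_add,
    Derivation.map_one_eq_zero, hD2, hD4, hDH, hDY, hDZ,
    smul_eq_mul, nsmul_eq_mul, mul_zero, zero_mul, add_zero, zero_add, mul_one] at dSz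
  have dU := congrArg D hU₁
  simp only [Derivation.leibniz, Derivation.leibniz_pow, map_sub, map_add,
    Derivation.map_one_eq_zero, hD2, hD4, hDH, hDY, hDZ,
    smul_eq_mul, nsmul_eq_mul, mul_zero, zero_mul, add_zero, zero_add, mul_one] at dU
  -- clean restatements
  have e5 : 2 * Sy * D Sy = 0 := by linear_combination dSy
  have ha' : D Sy = 0 := by
    rcases mul_eq_zero.mp e5 with h' | h'
    · rcases mul_eq_zero.mp h' with h'' | h''
      · exact absurd h'' h2ne
      · exact absurd h'' haSy
    · exact h'
  have e6 : Sz * D Sz = -(2 * H ^ 2) := by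
    apply mul_left_cancel₀ h2ne
    linear_combination dSz
  have eA : -(2 * Sy * U₁) + 2 * (Y - Z) * Sy * D U₁
      = (1 - Sy) + Y * D Sz := by
    linear_combination dU - (2 * (Y - Z) * U₁ + Z) * ha'
  -- the algebraic chain
  have eB : 2 * (Y - Z) ^ 2 * Sy * D U₁ = Y * (Sz - Sy) + Y * (Y - Z) * D Sz := by
    linear_combination (Y - Z) * eA + hU₁
  have eC : 2 * (Y - Z) ^ 2 * Sy * Sz * D U₁
      = Y * Sz * (Sz - Sy) - 2 * H ^ 2 * Y * (Y - Z) := by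
    linear_combination Sz * eB + Y * (Y - Z) * e6
  have hDif : Sz ^ 2 - Sy ^ 2 = 4 * H ^ 2 * (Y - Z) := by
    linear_combination hSz - hSy
  have key2 : 2 * ((Sz - Sy) ^ 2 * ((Sy + Sz) ^ 2 * Sy * Sz * D U₁ - 4 * H ^ 4 * Y)) = 0 := by
    linear_combination (16 * H ^ 4) * eC
      + (2 * Sy * Sz * D U₁ * (Sz ^ 2 - Sy ^ 2 + 4 * H ^ 2 * (Y - Z)) + 8 * H ^ 4 * Y) * hDif
  have key : (Sy + Sz) ^ 2 * Sy * Sz * D U₁ = 4 * H ^ 4 * Y := by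
    have := (mul_eq_zero.mp key2).resolve_left h2ne
    have := (mul_eq_zero.mp this).resolve_left (pow_ne_zero 2 hsub)
    linear_combination this
  linear_combination Z * key
end
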